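/- arXiv:0912.0342 — 3 statements merged into one kernel-verified Lean document; each statement's English description precedes it below -/
import Mathlib

section
/- In any weak bialgebra H, the set of group-like elements forms a monoid under the multiplication of H, with identity element the unit 1 of H. -/
open TensorProduct

noncomputable section

/-- The data of a (candidate) weak bialgebra over `k`: an associative unital
multiplication `mul` with unit `one`, a comultiplication `comul` and a counit `counit`. -/
structure WBData (k : Type) [CommRing k] (H : Type) [AddCommGroup H] [Module k H] where
  mul : H →ₗ[k] H →ₗ[k] H
  one : H
  comul : H →ₗ[k] H ⊗[k] H
  counit : H →ₗ[k] k

namespace WBData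

variable {k : Type} [CommRing k] {H : Type} [AddCommGroup H] [Module k H] (W : WBData k H)

/-- Multiplication as a map on the tensor product. -/
def mulT : H ⊗[k] H →ₗ[k] H := TensorProduct.lift W.mul

/-- The induced multiplication on `H ⊗ H`: `(a⊗b)·(c⊗d) = (ac)⊗(bd)`. -/
def mul₂ (x y : H ⊗[k] H) : H ⊗[k] H :=
  TensorProduct.map W.mulT W.mulT (TensorProduct.tensorTensorTensorComm k H H H H (x ⊗ₜ[k] y))

/-- The source counital map `ε_s(h) = 1' ε(h 1'')`. -/
def εsMap : H →ₗ[k] H :=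
  (TensorProduct.lid k H).toLinearMap
    ∘ₗ LinearMap.rTensor H (W.counit ∘ₗ W.mulT)
    ∘ₗ (TensorProduct.assoc k H H H).symm.toLinearMap
    ∘ₗ (TensorProduct.mk k H (H ⊗[k] H)).flip ((TensorProduct.comm k H H) (W.comul W.one))

/-- The target counital map `ε_t(h) = ε(1' h) 1''`. -/
def εtMap : H →ₗ[k] H :=
  (TensorProduct.rid k H).toLinearMap
    ∘ₗ LinearMap.lTensor H (W.counit ∘ₗ W.mulT)
    ∘ₗ (TensorProduct.assoc k H H H).toLinearMap
    ∘ₗ (TensorProduct.mk k (H ⊗[k] H) H) ((TensorProduct.comm k H H) (W.comul W.one))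

/-- The map `\bar ε_s(h) = 1' ε(1'' h)`. -/
def barεsMap : H →ₗ[k] H :=
  (TensorProduct.rid k H).toLinearMap
    ∘ₗ LinearMap.lTensor H (W.counit ∘ₗ W.mulT)
    ∘ₗ (TensorProduct.assoc k H H H).toLinearMap
    ∘ₗ (TensorProduct.mk k (H ⊗[k] H) H) (W.comul W.one)

/-- The source base algebra `H_s = ε_s(H)`. -/
def Hs : Submodule k H := LinearMap.range W.εsMap

/-- The target base algebra `H_t = ε_t(H)`. -/
def Ht : Submodule k H := LinearMap.range W.εtMap

/-- The axioms of a weak bialgebra for the data `W`. -/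
structure IsWeakBialgebra : Prop where
  mul_assoc : ∀ x y z : H, W.mul (W.mul x y) z = W.mul x (W.mul y z)
  one_mul : ∀ x : H, W.mul W.one x = x
  mul_one : ∀ x : H, W.mul x W.one = x
  coassoc : ∀ x : H,
    (TensorProduct.assoc k H H H) (LinearMap.rTensor H W.comul (W.comul x)) =
      LinearMap.lTensor H W.comul (W.comul x)
  counit_left : ∀ x : H,
    (TensorProduct.lid k H) (LinearMap.rTensor H W.counit (W.comul x)) = x
  counit_right : ∀ x : H,
    (TensorProduct.rid k H) (LinearMap.lTensor H W.counit (W.comul x)) = x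
  comul_mul : ∀ x y : H, W.comul (W.mul x y) = W.mul₂ (W.comul x) (W.comul y)
  counit_mul : ∀ x y z : H, W.counit (W.mul (W.mul x y) z) =
    (LinearMap.mul' k k)
      (TensorProduct.map (W.counit ∘ₗ W.mul x) (W.counit ∘ₗ W.mul.flip z) (W.comul y))
  counit_mul_op : ∀ x y z : H, W.counit (W.mul (W.mul x y) z) =
    (LinearMap.mul' k k)
      (TensorProduct.map (W.counit ∘ₗ W.mul x) (W.counit ∘ₗ W.mul.flip z)
        ((TensorProduct.comm k H H) (W.comul y)))
  comul_one : LinearMap.rTensor H W.comul (W.comul W.one) =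
    (LinearMap.rTensor H (TensorProduct.comm k H H).toLinearMap)
      ((TensorProduct.assoc k H H H).symm
        ((TensorProduct.map W.mulT LinearMap.id)
          ((TensorProduct.tensorTensorTensorComm k H H H H)
            (((TensorProduct.comm k H H) (W.comul W.one)) ⊗ₜ[k] (W.comul W.one)))))
  comul_one_op : LinearMap.rTensor H W.comul (W.comul W.one) =
    (LinearMap.rTensor H (TensorProduct.comm k H H).toLinearMap)
      ((TensorProduct.assoc k H H H).symm
        ((TensorProduct.map (W.mulT ∘ₗ (TensorProduct.comm k H H).toLinearMap) LinearMap.id)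
          ((TensorProduct.tensorTensorTensorComm k H H H H)
            (((TensorProduct.comm k H H) (W.comul W.one)) ⊗ₜ[k] (W.comul W.one)))))

/-- `g` is right group-like: `Δ g = (g⊗g)·Δ1` and `ε_s(g) = 1`. -/
def IsRightGroupLike (g : H) : Prop :=
  W.comul g = W.mul₂ (g ⊗ₜ[k] g) (W.comul W.one) ∧ W.εsMap g = W.one

/-- `g` is left group-like: `Δ g = Δ1·(g⊗g)` and `ε_t(g) = 1`. -/
def IsLeftGroupLike (g : H) : Prop :=
  W.comul g = W.mul₂ (W.comul W.one) (g ⊗ₜ[k] g) ∧ W.εtMap g = W.one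

/-- `g` is group-like if it is both right and left group-like. -/
def IsGroupLike (g : H) : Prop := W.IsRightGroupLike g ∧ W.IsLeftGroupLike g

/-- The coaction `x ↦ x' ⊗ (g x'')` of `H` on (the ambient space of) `H_s`,
defining the comodule `H_s^g` for a group-like `g`. -/
def βg (g : H) : H →ₗ[k] H ⊗[k] H :=
  LinearMap.lTensor H (W.mul g) ∘ₗ W.comul

/-- A coaction `β : V → V ⊗ H` is a (right) comodule structure if it is coassociative and
counital. -/
def IsCoaction {V : Type} [AddCommGroup V] [Module k V] (β : V →ₗ[k] V ⊗[k] H) : Prop :=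
  (∀ v : V, (TensorProduct.assoc k V H H) (LinearMap.rTensor H β (β v)) =
      LinearMap.lTensor V W.comul (β v)) ∧
  (∀ v : V, (TensorProduct.rid k V) (LinearMap.lTensor V W.counit (β v)) = v)

/-- The truncation idempotent `P_{V,W}(v⊗w) = (v₀⊗w₀) ε(v₁w₁)` of two comodules, expressed
on the ambient tensor product. -/
def truncP {V U : Type} [AddCommGroup V] [Module k V] [AddCommGroup U] [Module k U]
    (βa : V →ₗ[k] V ⊗[k] H) (βb : U →ₗ[k] U ⊗[k] H) : V ⊗[k] U →ₗ[k] V ⊗[k] U :=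
  (TensorProduct.rid k (V ⊗[k] U)).toLinearMap
    ∘ₗ LinearMap.lTensor (V ⊗[k] U) (W.counit ∘ₗ W.mulT)
    ∘ₗ (TensorProduct.tensorTensorTensorComm k V H U H).toLinearMap
    ∘ₗ TensorProduct.map βa βb

/-- The coaction `v⊗w ↦ (v₀⊗w₀)⊗(v₁w₁)` on the (truncated) tensor product of two comodules,
expressed on the ambient tensor product. -/
def βtens {V U : Type} [AddCommGroup V] [Module k V] [AddCommGroup U] [Module k U]
    (βa : V →ₗ[k] V ⊗[k] H) (βb : U →ₗ[k] U ⊗[k] H) : V ⊗[k] U →ₗ[k] (V ⊗[k] U) ⊗[k] H :=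
  LinearMap.lTensor (V ⊗[k] U) W.mulT
    ∘ₗ (TensorProduct.tensorTensorTensorComm k V H U H).toLinearMap
    ∘ₗ TensorProduct.map βa βb

/-- The two-sided ideal (with respect to `W.mul`) generated by a set `s`. -/
def twoSidedIdeal (s : Set H) : Submodule k H :=
  sInf {J : Submodule k H | s ⊆ J ∧ ∀ x : H, ∀ y ∈ J, W.mul x y ∈ J ∧ W.mul y x ∈ J}

/-- Powers of an element with respect to `W.mul`. -/
def powW (g : H) : ℕ → H
  | 0 => W.one
  | n + 1 => W.mul (powW g n) g

/-- An antipode for `W`, making it a weak Hopf algebra. -/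
def IsAntipode (S : H →ₗ[k] H) : Prop :=
  (∀ x : H, W.mulT (LinearMap.lTensor H S (W.comul x)) = W.εtMap x) ∧
  (∀ x : H, W.mulT (LinearMap.rTensor H S (W.comul x)) = W.εsMap x) ∧
  (∀ x : H, W.mulT (LinearMap.lTensor H S
      (LinearMap.rTensor H (W.mulT ∘ₗ LinearMap.rTensor H S)
        (LinearMap.rTensor H W.comul (W.comul x)))) = S x)

end WBData

/-- A homomorphism of weak bialgebras: a linear map which is a homomorphism of unital
algebras and of counital coalgebras. -/
def IsWBHom {k : Type} [CommRing k] {H H' : Type} [AddCommGroup H] [Module k H]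
    [AddCommGroup H'] [Module k H'] (W : WBData k H) (W' : WBData k H')
    (f : H →ₗ[k] H') : Prop :=
  (∀ x y : H, f (W.mul x y) = W'.mul (f x) (f y)) ∧
  f W.one = W'.one ∧
  (∀ x : H, W'.comul (f x) = TensorProduct.map f f (W.comul x)) ∧
  (∀ x : H, W'.counit (f x) = W.counit x)

end


namespace WBData

variable {k : Type} [CommRing k] {H : Type} [AddCommGroup H] [Module k H] (W : WBData k H)

lemma mulT_tmul' (a b : H) : W.mulT (a ⊗ₜ[k] b) = W.mul a b := rfl

lemma mul₂_tmul' (a b c d : H) :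
    W.mul₂ (a ⊗ₜ[k] b) (c ⊗ₜ[k] d) = W.mul a c ⊗ₜ[k] W.mul b d := by
  simp [mul₂, tensorTensorTensorComm_tmul, mulT_tmul']

lemma mul₂_add_right' (x y y' : H ⊗[k] H) :
    W.mul₂ x (y + y') = W.mul₂ x y + W.mul₂ x y' := by
  simp [mul₂, tmul_add]

lemma mul₂_add_left' (x x' y : H ⊗[k] H) :
    W.mul₂ (x + x') y = W.mul₂ x y + W.mul₂ x' y := by
  simp [mul₂, add_tmul]

lemma mul₂_zero_right' (x : H ⊗[k] H) : W.mul₂ x 0 = 0 := by simp [mul₂]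
lemma mul₂_zero_left' (y : H ⊗[k] H) : W.mul₂ 0 y = 0 := by simp [mul₂]

lemma mul₂_assoc' (hassoc : ∀ x y z : H, W.mul (W.mul x y) z = W.mul x (W.mul y z))
    (x y z : H ⊗[k] H) : W.mul₂ (W.mul₂ x y) z = W.mul₂ x (W.mul₂ y z) := by
  induction x using TensorProduct.induction_on with
  | zero => simp [W.mul₂_zero_left']
  | add u v hu hv => simp [W.mul₂_add_left', hu, hv]
  | tmul a b =>
    induction y using TensorProduct.induction_on with
    | zero => simp [W.mul₂_zero_left', W.mul₂_zero_right']
    | add u v hu hv => simp [W.mul₂_add_left', W.mul₂_add_right', hu, hv]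
    | tmul c d =>
      induction z using TensorProduct.induction_on with
      | zero => simp [W.mul₂_zero_right']
      | add u v hu hv => simp [W.mul₂_add_right', hu, hv]
      | tmul e f => simp [W.mul₂_tmul', hassoc]

/-- `Es h (a ⊗ b) = ε(h b) • a`. -/
noncomputable def Es (h : H) : H ⊗[k] H →ₗ[k] H :=
  TensorProduct.lift ((LinearMap.lsmul k H ∘ₗ (W.counit ∘ₗ W.mul h)).flip)

lemma Es_tmul (h a b : H) : W.Es h (a ⊗ₜ[k] b) = W.counit (W.mul h b) • a := rfl

/-- `Et h (a ⊗ b) = ε(a h) • b`. -/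
noncomputable def Et (h : H) : H ⊗[k] H →ₗ[k] H :=
  TensorProduct.lift (LinearMap.lsmul k H ∘ₗ W.counit ∘ₗ W.mul.flip h)

lemma Et_tmul (h a b : H) : W.Et h (a ⊗ₜ[k] b) = W.counit (W.mul a h) • b := rfl

lemma εsMap_eq (h : H) : W.εsMap h = W.Es h (W.comul W.one) := by
  rw [εsMap]
  generalize W.comul W.one = e
  induction e using TensorProduct.induction_on with
  | zero => simp
  | add u v hu hv =>
    simp only [LinearMap.comp_apply, LinearEquiv.coe_coe, TensorProduct.mk_apply,
      LinearMap.flip_apply, LinearMap.add_apply, map_add, tmul_add] at hu hv ⊢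
    rw [hu, hv]
  | tmul a b => simp [mulT_tmul', Es_tmul]

lemma εtMap_eq (h : H) : W.εtMap h = W.Et h (W.comul W.one) := by
  rw [εtMap]
  generalize W.comul W.one = e
  induction e using TensorProduct.induction_on with
  | zero => simp
  | add u v hu hv =>
    simp only [LinearMap.comp_apply, LinearEquiv.coe_coe, TensorProduct.mk_apply,
      LinearMap.flip_apply, LinearMap.add_apply, map_add, add_tmul] at hu hv ⊢
    rw [hu, hv]
  | tmul a b => simp [mulT_tmul', Et_tmul]

variable (hW : W.IsWeakBialgebra)
include hW

lemma counit_factor_s (x z : H) :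
    W.counit (W.mul (W.εsMap x) z) = W.counit (W.mul x z) := by
  have h1 := hW.counit_mul_op x W.one z
  rw [hW.mul_one] at h1
  rw [h1, εsMap_eq]
  generalize W.comul W.one = e
  induction e using TensorProduct.induction_on with
  | zero => simp
  | add u v hu hv =>
    simp only [map_add, LinearMap.add_apply] at hu hv ⊢; rw [← hu, ← hv]
  | tmul a b =>
    simp [Es_tmul, LinearMap.mul'_apply, smul_eq_mul, mul_comm]

lemma counit_factor_t (x z : H) :
    W.counit (W.mul x (W.εtMap z)) = W.counit (W.mul x z) := by
  have h1 := hW.counit_mul_op x W.one z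
  rw [hW.mul_one] at h1
  rw [h1, εtMap_eq]
  generalize W.comul W.one = e
  induction e using TensorProduct.induction_on with
  | zero => simp
  | add u v hu hv =>
    simp only [map_add, LinearMap.add_apply] at hu hv ⊢; rw [← hu, ← hv]
  | tmul a b =>
    simp [Et_tmul, LinearMap.mul'_apply, smul_eq_mul, mul_comm]

lemma εsMap_mul' (x z : H) :
    W.εsMap (W.mul x z) = W.εsMap (W.mul (W.εsMap x) z) := by
  rw [W.εsMap_eq (W.mul x z), W.εsMap_eq (W.mul (W.εsMap x) z)]
  generalize W.comul W.one = e
  induction e using TensorProduct.induction_on with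
  | zero => simp
  | add u v hu hv => simp only [map_add, hu, hv]
  | tmul a b =>
    rw [Es_tmul, Es_tmul, hW.mul_assoc, hW.mul_assoc, W.counit_factor_s hW]

lemma εtMap_mul' (x z : H) :
    W.εtMap (W.mul x z) = W.εtMap (W.mul x (W.εtMap z)) := by
  rw [W.εtMap_eq (W.mul x z), W.εtMap_eq (W.mul x (W.εtMap z))]
  generalize W.comul W.one = e
  induction e using TensorProduct.induction_on with
  | zero => simp
  | add u v hu hv => simp only [map_add, hu, hv]
  | tmul a b =>
    rw [Et_tmul, Et_tmul, ← hW.mul_assoc, ← hW.mul_assoc, W.counit_factor_t hW]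

lemma εsMap_one' : W.εsMap W.one = W.one := by
  rw [εsMap_eq]
  have key : ∀ e : H ⊗[k] H,
      W.Es W.one e = (TensorProduct.rid k H) (LinearMap.lTensor H W.counit e) := by
    intro e
    induction e using TensorProduct.induction_on with
    | zero => simp
    | add u v hu hv => simp only [map_add, hu, hv]
    | tmul a b => simp [Es_tmul, hW.one_mul]
  rw [key, hW.counit_right]

lemma εtMap_one' : W.εtMap W.one = W.one := by
  rw [εtMap_eq]
  have key : ∀ e : H ⊗[k] H,
      W.Et W.one e = (TensorProduct.lid k H) (LinearMap.rTensor H W.counit e) := by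
    intro e
    induction e using TensorProduct.induction_on with
    | zero => simp
    | add u v hu hv => simp only [map_add, hu, hv]
    | tmul a b => simp [Et_tmul, hW.mul_one]
  rw [key, hW.counit_left]

lemma mul₂_one_left (e : H ⊗[k] H) : W.mul₂ (W.one ⊗ₜ[k] W.one) e = e := by
  induction e using TensorProduct.induction_on with
  | zero => simp [W.mul₂_zero_right']
  | add u v hu hv => rw [W.mul₂_add_right', hu, hv]
  | tmul a b => rw [W.mul₂_tmul', hW.one_mul, hW.one_mul]

lemma mul₂_one_right (e : H ⊗[k] H) : W.mul₂ e (W.one ⊗ₜ[k] W.one) = e := by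
  induction e using TensorProduct.induction_on with
  | zero => simp [W.mul₂_zero_left']
  | add u v hu hv => rw [W.mul₂_add_left', hu, hv]
  | tmul a b => rw [W.mul₂_tmul', hW.mul_one, hW.mul_one]

lemma comul_one_idem : W.mul₂ (W.comul W.one) (W.comul W.one) = W.comul W.one := by
  have h := hW.comul_mul W.one W.one
  rw [hW.mul_one] at h
  exact h.symm

lemma one_groupLike : W.IsGroupLike W.one :=
  ⟨⟨(W.mul₂_one_left hW _).symm, W.εsMap_one' hW⟩,
   ⟨(W.mul₂_one_right hW _).symm, W.εtMap_one' hW⟩⟩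

lemma mul_groupLike {g h : H} (hg : W.IsGroupLike g) (hh : W.IsGroupLike h) :
    W.IsGroupLike (W.mul g h) := by
  set e := W.comul W.one with he
  have ma := W.mul₂_assoc' hW.mul_assoc
  have hgh : W.mul g h ⊗ₜ[k] W.mul g h = W.mul₂ (g ⊗ₜ[k] g) (h ⊗ₜ[k] h) :=
    (W.mul₂_tmul' g g h h).symm
  have hr : W.comul (W.mul g h) = W.mul₂ (W.mul g h ⊗ₜ[k] W.mul g h) e := by
    calc W.comul (W.mul g h) = W.mul₂ (W.comul g) (W.comul h) := hW.comul_mul g h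
      _ = W.mul₂ (W.mul₂ (g ⊗ₜ[k] g) e) (W.mul₂ e (h ⊗ₜ[k] h)) := by rw [← hg.1.1, ← hh.2.1]
      _ = W.mul₂ (g ⊗ₜ[k] g) (W.mul₂ (W.mul₂ e e) (h ⊗ₜ[k] h)) := by rw [ma, ma]
      _ = W.mul₂ (g ⊗ₜ[k] g) (W.mul₂ e (h ⊗ₜ[k] h)) := by rw [W.comul_one_idem hW]
      _ = W.mul₂ (g ⊗ₜ[k] g) (W.mul₂ (h ⊗ₜ[k] h) e) := by rw [← hh.2.1, hh.1.1]
      _ = W.mul₂ (W.mul₂ (g ⊗ₜ[k] g) (h ⊗ₜ[k] h)) e := (ma _ _ _).symm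
      _ = W.mul₂ (W.mul g h ⊗ₜ[k] W.mul g h) e := by rw [← hgh]
  have hl : W.comul (W.mul g h) = W.mul₂ e (W.mul g h ⊗ₜ[k] W.mul g h) := by
    refine hr.trans ?_
    calc W.mul₂ (W.mul g h ⊗ₜ[k] W.mul g h) e
        = W.mul₂ (g ⊗ₜ[k] g) (W.mul₂ (h ⊗ₜ[k] h) e) := by rw [hgh, ma]
      _ = W.mul₂ (g ⊗ₜ[k] g) (W.mul₂ e (h ⊗ₜ[k] h)) := by rw [← hh.1.1, hh.2.1]
      _ = W.mul₂ (W.mul₂ (g ⊗ₜ[k] g) e) (h ⊗ₜ[k] h) := (ma _ _ _).symm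
      _ = W.mul₂ (W.mul₂ e (g ⊗ₜ[k] g)) (h ⊗ₜ[k] h) := by rw [← hg.1.1, hg.2.1]
      _ = W.mul₂ e (W.mul₂ (g ⊗ₜ[k] g) (h ⊗ₜ[k] h)) := ma _ _ _
      _ = W.mul₂ e (W.mul g h ⊗ₜ[k] W.mul g h) := by rw [← hgh]
  refine ⟨⟨hr, ?_⟩, ⟨hl, ?_⟩⟩
  · rw [W.εsMap_mul' hW, hg.1.2, hW.one_mul, hh.1.2]
  · rw [W.εtMap_mul' hW, hh.2.2, hW.mul_one, hg.2.2]

end WBData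

/-- In any weak bialgebra `H`, the set of group-like elements forms a monoid
under the multiplication of `H`, with identity element the unit `1` of `H`. -/
theorem grouplikes_form_monoid {k : Type} [Field k] {H : Type} [AddCommGroup H] [Module k H]
    (W : WBData k H) (hW : W.IsWeakBialgebra) :
    W.IsGroupLike W.one ∧
    (∀ g h : H, W.IsGroupLike g → W.IsGroupLike h → W.IsGroupLike (W.mul g h)) ∧
    (∀ g : H, W.IsGroupLike g → W.mul W.one g = g ∧ W.mul g W.one = g) ∧
    (∀ g h l : H, W.IsGroupLike g → W.IsGroupLike h → W.IsGroupLike l →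
      W.mul (W.mul g h) l = W.mul g (W.mul h l)) := by
  refine ⟨W.one_groupLike hW, fun g h hg hh => W.mul_groupLike hW hg hh,
    fun g _ => ⟨hW.one_mul g, hW.mul_one g⟩, fun g h l _ _ _ => hW.mul_assoc g h l⟩
end

section
/- In every weak bialgebra H, the restriction of the target counital map ε_t to the source base algebra H_s gives an algebra anti-isomorphism ε_t|_{H_s}: H_s → H_t, whose inverse is the restriction to H_t of the map \bar{ε}_s defined by \bar{ε}_s(x) = 1' ε(1'' x). -/
open TensorProduct

section Aux
open Finset
variable {k : Type} [Field k] {H : Type} [AddCommGroup H] [Module k H]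
variable (W : WBData k H) (hW : W.IsWeakBialgebra)
variable {s : Finset (H × H)}

lemma mulT_tmul (x y : H) : W.mulT (x ⊗ₜ[k] y) = W.mul x y := rfl

lemma mul2_tmul (a b c d : H) :
    W.mul₂ (a ⊗ₜ[k] b) (c ⊗ₜ[k] d) = (W.mul a c) ⊗ₜ[k] (W.mul b d) := by
  simp [WBData.mul₂, tensorTensorTensorComm_tmul, mulT_tmul]

lemma εt_eq (hs : W.comul W.one = ∑ p ∈ s, p.1 ⊗ₜ[k] p.2) (h : H) :
    W.εtMap h = ∑ p ∈ s, W.counit (W.mul p.1 h) • p.2 := by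
  simp [WBData.εtMap, hs, map_sum, TensorProduct.sum_tmul, TensorProduct.comm_tmul,
    TensorProduct.assoc_tmul, TensorProduct.mk_apply, LinearMap.lTensor_tmul,
    TensorProduct.rid_tmul, mulT_tmul]

lemma εs_eq (hs : W.comul W.one = ∑ p ∈ s, p.1 ⊗ₜ[k] p.2) (h : H) :
    W.εsMap h = ∑ p ∈ s, W.counit (W.mul h p.2) • p.1 := by
  simp [WBData.εsMap, hs, map_sum, TensorProduct.sum_tmul, TensorProduct.tmul_sum,
    TensorProduct.comm_tmul, TensorProduct.assoc_symm_tmul, TensorProduct.mk_apply,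
    LinearMap.rTensor_tmul, TensorProduct.lid_tmul, mulT_tmul]

lemma bεs_eq (hs : W.comul W.one = ∑ p ∈ s, p.1 ⊗ₜ[k] p.2) (h : H) :
    W.barεsMap h = ∑ p ∈ s, W.counit (W.mul p.2 h) • p.1 := by
  simp [WBData.barεsMap, hs, map_sum, TensorProduct.sum_tmul,
    TensorProduct.assoc_tmul, TensorProduct.mk_apply, LinearMap.lTensor_tmul,
    TensorProduct.rid_tmul, mulT_tmul]

include hW

lemma star (hs : W.comul W.one = ∑ p ∈ s, p.1 ⊗ₜ[k] p.2) (u v : H) :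
    W.counit (W.mul u v)
      = ∑ p ∈ s, W.counit (W.mul u p.1) * W.counit (W.mul p.2 v) := by
  have h := hW.counit_mul u W.one v
  rw [hW.mul_one, hs] at h
  rw [h]
  simp [map_sum, LinearMap.mul'_apply]

lemma star' (hs : W.comul W.one = ∑ p ∈ s, p.1 ⊗ₜ[k] p.2) (u v : H) :
    W.counit (W.mul u v)
      = ∑ p ∈ s, W.counit (W.mul u p.2) * W.counit (W.mul p.1 v) := by
  have h := hW.counit_mul_op u W.one v
  rw [hW.mul_one, hs] at h
  rw [h]
  simp [map_sum, LinearMap.mul'_apply]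

lemma comul_one_sum (hs : W.comul W.one = ∑ p ∈ s, p.1 ⊗ₜ[k] p.2) :
    ∑ p ∈ s, (W.comul p.1) ⊗ₜ[k] p.2
      = ∑ p ∈ s, ∑ q ∈ s, (p.1 ⊗ₜ[k] (W.mul p.2 q.1)) ⊗ₜ[k] q.2 := by
  have h := hW.comul_one
  rw [hs] at h
  calc ∑ p ∈ s, (W.comul p.1) ⊗ₜ[k] p.2
      = LinearMap.rTensor H W.comul (∑ p ∈ s, p.1 ⊗ₜ[k] p.2) := by
        simp [map_sum]
    _ = ∑ p ∈ s, ∑ q ∈ s, (p.1 ⊗ₜ[k] (W.mul p.2 q.1)) ⊗ₜ[k] q.2 := by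
        rw [h]
        simp [map_sum, TensorProduct.sum_tmul, TensorProduct.tmul_sum,
          tensorTensorTensorComm_tmul, TensorProduct.assoc_symm_tmul,
          TensorProduct.comm_tmul, mulT_tmul]
        rw [Finset.sum_comm]

lemma comul_one_op_sum (hs : W.comul W.one = ∑ p ∈ s, p.1 ⊗ₜ[k] p.2) :
    ∑ p ∈ s, (W.comul p.1) ⊗ₜ[k] p.2
      = ∑ p ∈ s, ∑ q ∈ s, (p.1 ⊗ₜ[k] (W.mul q.1 p.2)) ⊗ₜ[k] q.2 := by
  have h := hW.comul_one_op
  rw [hs] at h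
  calc ∑ p ∈ s, (W.comul p.1) ⊗ₜ[k] p.2
      = LinearMap.rTensor H W.comul (∑ p ∈ s, p.1 ⊗ₜ[k] p.2) := by
        simp [map_sum]
    _ = ∑ p ∈ s, ∑ q ∈ s, (p.1 ⊗ₜ[k] (W.mul q.1 p.2)) ⊗ₜ[k] q.2 := by
        rw [h]
        simp [map_sum, TensorProduct.sum_tmul, TensorProduct.tmul_sum,
          tensorTensorTensorComm_tmul, TensorProduct.assoc_symm_tmul,
          TensorProduct.comm_tmul, mulT_tmul]
        rw [Finset.sum_comm]

lemma coassoc_one_sum (hs : W.comul W.one = ∑ p ∈ s, p.1 ⊗ₜ[k] p.2) :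
    ∑ p ∈ s, p.1 ⊗ₜ[k] (W.comul p.2)
      = ∑ p ∈ s, ∑ q ∈ s, p.1 ⊗ₜ[k] ((W.mul p.2 q.1) ⊗ₜ[k] q.2) := by
  have h := hW.coassoc W.one
  have h2 : LinearMap.rTensor H W.comul (W.comul W.one)
      = ∑ p ∈ s, (W.comul p.1) ⊗ₜ[k] p.2 := by rw [hs]; simp [map_sum]
  rw [h2, comul_one_sum W hW hs] at h
  rw [hs] at h
  calc ∑ p ∈ s, p.1 ⊗ₜ[k] (W.comul p.2)
      = LinearMap.lTensor H W.comul (∑ p ∈ s, p.1 ⊗ₜ[k] p.2) := by simp [map_sum]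
    _ = _ := by
        rw [← h]
        simp [map_sum, TensorProduct.assoc_tmul]

lemma mid1 (hs : W.comul W.one = ∑ p ∈ s, p.1 ⊗ₜ[k] p.2) :
    ∑ p ∈ s, ∑ q ∈ s, W.counit (W.mul p.2 q.1) • (p.1 ⊗ₜ[k] q.2)
      = ∑ p ∈ s, p.1 ⊗ₜ[k] p.2 := by
  have h := congrArg (⇑(LinearMap.rTensor H
      ((TensorProduct.rid k H).toLinearMap ∘ₗ LinearMap.lTensor H W.counit)))
    (comul_one_sum W hW hs)
  simp only [map_sum, LinearMap.rTensor_tmul, LinearMap.coe_comp, LinearEquiv.coe_coe,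
    Function.comp_apply, LinearMap.lTensor_tmul, TensorProduct.rid_tmul,
    TensorProduct.smul_tmul'] at h
  calc ∑ p ∈ s, ∑ q ∈ s, W.counit (W.mul p.2 q.1) • (p.1 ⊗ₜ[k] q.2)
      = ∑ p ∈ s, ∑ q ∈ s, W.counit (W.mul p.2 q.1) • p.1 ⊗ₜ[k] q.2 := by
        simp [TensorProduct.smul_tmul']
    _ = ∑ p ∈ s, (TensorProduct.rid k H) ((LinearMap.lTensor H W.counit) (W.comul p.1)) ⊗ₜ[k] p.2 := h.symm
    _ = ∑ p ∈ s, p.1 ⊗ₜ[k] p.2 := by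
        refine Finset.sum_congr rfl fun p _ => ?_
        rw [hW.counit_right p.1]

lemma mid2 (hs : W.comul W.one = ∑ p ∈ s, p.1 ⊗ₜ[k] p.2) :
    ∑ p ∈ s, ∑ q ∈ s, W.counit (W.mul q.1 p.2) • (p.1 ⊗ₜ[k] q.2)
      = ∑ p ∈ s, p.1 ⊗ₜ[k] p.2 := by
  have h := congrArg (⇑(LinearMap.rTensor H
      ((TensorProduct.rid k H).toLinearMap ∘ₗ LinearMap.lTensor H W.counit)))
    (comul_one_op_sum W hW hs)
  simp only [map_sum, LinearMap.rTensor_tmul, LinearMap.coe_comp, LinearEquiv.coe_coe,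
    Function.comp_apply, LinearMap.lTensor_tmul, TensorProduct.rid_tmul,
    TensorProduct.smul_tmul'] at h
  calc ∑ p ∈ s, ∑ q ∈ s, W.counit (W.mul q.1 p.2) • (p.1 ⊗ₜ[k] q.2)
      = ∑ p ∈ s, ∑ q ∈ s, W.counit (W.mul q.1 p.2) • p.1 ⊗ₜ[k] q.2 := by
        simp [TensorProduct.smul_tmul']
    _ = ∑ p ∈ s, (TensorProduct.rid k H) ((LinearMap.lTensor H W.counit) (W.comul p.1)) ⊗ₜ[k] p.2 := h.symm
    _ = ∑ p ∈ s, p.1 ⊗ₜ[k] p.2 := by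
        refine Finset.sum_congr rfl fun p _ => ?_
        rw [hW.counit_right p.1]

lemma R1 (hs : W.comul W.one = ∑ p ∈ s, p.1 ⊗ₜ[k] p.2) :
    ∑ p ∈ s, (W.εsMap p.1) ⊗ₜ[k] p.2 = ∑ p ∈ s, p.1 ⊗ₜ[k] p.2 := by
  calc ∑ p ∈ s, (W.εsMap p.1) ⊗ₜ[k] p.2
      = ∑ p ∈ s, ∑ q ∈ s, W.counit (W.mul p.1 q.2) • (q.1 ⊗ₜ[k] p.2) := by
        refine Finset.sum_congr rfl fun p _ => ?_
        rw [εs_eq W hs p.1, TensorProduct.sum_tmul]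
        simp [TensorProduct.smul_tmul']
    _ = ∑ p ∈ s, ∑ q ∈ s, W.counit (W.mul q.1 p.2) • (p.1 ⊗ₜ[k] q.2) := Finset.sum_comm
    _ = ∑ p ∈ s, p.1 ⊗ₜ[k] p.2 := mid2 W hW hs

lemma R2 (hs : W.comul W.one = ∑ p ∈ s, p.1 ⊗ₜ[k] p.2) :
    ∑ p ∈ s, p.1 ⊗ₜ[k] (W.εtMap p.2) = ∑ p ∈ s, p.1 ⊗ₜ[k] p.2 := by
  calc ∑ p ∈ s, p.1 ⊗ₜ[k] (W.εtMap p.2)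
      = ∑ p ∈ s, ∑ q ∈ s, W.counit (W.mul q.1 p.2) • (p.1 ⊗ₜ[k] q.2) := by
        refine Finset.sum_congr rfl fun p _ => ?_
        rw [εt_eq W hs p.2, TensorProduct.tmul_sum]
        simp
    _ = ∑ p ∈ s, p.1 ⊗ₜ[k] p.2 := mid2 W hW hs

lemma R3 (hs : W.comul W.one = ∑ p ∈ s, p.1 ⊗ₜ[k] p.2) :
    ∑ p ∈ s, (W.barεsMap p.1) ⊗ₜ[k] p.2 = ∑ p ∈ s, p.1 ⊗ₜ[k] p.2 := by
  calc ∑ p ∈ s, (W.barεsMap p.1) ⊗ₜ[k] p.2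
      = ∑ p ∈ s, ∑ q ∈ s, W.counit (W.mul q.2 p.1) • (q.1 ⊗ₜ[k] p.2) := by
        refine Finset.sum_congr rfl fun p _ => ?_
        rw [bεs_eq W hs p.1, TensorProduct.sum_tmul]
        simp [TensorProduct.smul_tmul']
    _ = ∑ p ∈ s, ∑ q ∈ s, W.counit (W.mul p.2 q.1) • (p.1 ⊗ₜ[k] q.2) := Finset.sum_comm
    _ = ∑ p ∈ s, p.1 ⊗ₜ[k] p.2 := mid1 W hW hs

lemma bεs_εs (hs : W.comul W.one = ∑ p ∈ s, p.1 ⊗ₜ[k] p.2) (h : H) :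
    W.barεsMap (W.εsMap h) = W.εsMap h := by
  have hR := congrArg (⇑((TensorProduct.rid k H).toLinearMap
      ∘ₗ LinearMap.lTensor H (W.counit ∘ₗ W.mul h))) (R3 W hW hs)
  simp only [map_sum, LinearMap.coe_comp, LinearEquiv.coe_coe, Function.comp_apply,
    LinearMap.lTensor_tmul, TensorProduct.rid_tmul] at hR
  rw [εs_eq W hs h, map_sum]
  simp only [map_smul]
  exact hR

lemma εs_bεs (hs : W.comul W.one = ∑ p ∈ s, p.1 ⊗ₜ[k] p.2) (h : H) :
    W.εsMap (W.barεsMap h) = W.barεsMap h := by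
  have hR := congrArg (⇑((TensorProduct.rid k H).toLinearMap
      ∘ₗ LinearMap.lTensor H (W.counit ∘ₗ W.mul.flip h))) (R1 W hW hs)
  simp only [map_sum, LinearMap.coe_comp, LinearEquiv.coe_coe, Function.comp_apply,
    LinearMap.lTensor_tmul, TensorProduct.rid_tmul, LinearMap.flip_apply] at hR
  rw [bεs_eq W hs h, map_sum]
  simp only [map_smul]
  exact hR

lemma εt_εt (hs : W.comul W.one = ∑ p ∈ s, p.1 ⊗ₜ[k] p.2) (h : H) :
    W.εtMap (W.εtMap h) = W.εtMap h := by
  have hR := congrArg (⇑((TensorProduct.lid k H).toLinearMap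
      ∘ₗ LinearMap.rTensor H (W.counit ∘ₗ W.mul.flip h))) (R2 W hW hs)
  simp only [map_sum, LinearMap.coe_comp, LinearEquiv.coe_coe, Function.comp_apply,
    LinearMap.rTensor_tmul, TensorProduct.lid_tmul, LinearMap.flip_apply] at hR
  rw [εt_eq W hs h, map_sum]
  simp only [map_smul]
  exact hR

lemma K1 (hs : W.comul W.one = ∑ p ∈ s, p.1 ⊗ₜ[k] p.2) (h : H) :
    W.barεsMap (W.εtMap h) = W.barεsMap h := by
  rw [εt_eq W hs h, map_sum]
  simp only [map_smul]
  rw [bεs_eq W hs h]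
  calc ∑ q ∈ s, W.counit (W.mul q.1 h) • W.barεsMap q.2
      = ∑ q ∈ s, ∑ p ∈ s, (W.counit (W.mul p.2 q.2) * W.counit (W.mul q.1 h)) • p.1 := by
        refine Finset.sum_congr rfl fun q _ => ?_
        rw [bεs_eq W hs q.2, Finset.smul_sum]
        refine Finset.sum_congr rfl fun p _ => ?_
        rw [smul_smul, mul_comm]
    _ = ∑ p ∈ s, ∑ q ∈ s, (W.counit (W.mul p.2 q.2) * W.counit (W.mul q.1 h)) • p.1 :=
        Finset.sum_comm
    _ = ∑ p ∈ s, W.counit (W.mul p.2 h) • p.1 := by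
        refine Finset.sum_congr rfl fun p _ => ?_
        rw [← Finset.sum_smul, ← star' W hW hs p.2 h]

lemma K2 (hs : W.comul W.one = ∑ p ∈ s, p.1 ⊗ₜ[k] p.2) (h : H) :
    W.εtMap (W.barεsMap h) = W.εtMap h := by
  rw [bεs_eq W hs h, map_sum]
  simp only [map_smul]
  rw [εt_eq W hs h]
  calc ∑ p ∈ s, W.counit (W.mul p.2 h) • W.εtMap p.1
      = ∑ p ∈ s, ∑ q ∈ s, (W.counit (W.mul q.1 p.1) * W.counit (W.mul p.2 h)) • q.2 := by
        refine Finset.sum_congr rfl fun p _ => ?_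
        rw [εt_eq W hs p.1, Finset.smul_sum]
        refine Finset.sum_congr rfl fun q _ => ?_
        rw [smul_smul, mul_comm]
    _ = ∑ q ∈ s, ∑ p ∈ s, (W.counit (W.mul q.1 p.1) * W.counit (W.mul p.2 h)) • q.2 :=
        Finset.sum_comm
    _ = ∑ q ∈ s, W.counit (W.mul q.1 h) • q.2 := by
        refine Finset.sum_congr rfl fun q _ => ?_
        rw [← Finset.sum_smul, ← star W hW hs q.1 h]

lemma DS1 (hs : W.comul W.one = ∑ p ∈ s, p.1 ⊗ₜ[k] p.2) (g : H) :
    W.comul (W.εsMap g) = ∑ p ∈ s, p.1 ⊗ₜ[k] (W.mul p.2 (W.εsMap g)) := by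
  have h := congrArg (⇑((TensorProduct.rid k (H ⊗[k] H)).toLinearMap
      ∘ₗ LinearMap.lTensor (H ⊗[k] H) (W.counit ∘ₗ W.mul g))) (comul_one_sum W hW hs)
  simp only [map_sum, LinearMap.coe_comp, LinearEquiv.coe_coe, Function.comp_apply,
    LinearMap.lTensor_tmul, TensorProduct.rid_tmul] at h
  calc W.comul (W.εsMap g)
      = ∑ p ∈ s, W.counit (W.mul g p.2) • W.comul p.1 := by
        rw [εs_eq W hs g, map_sum]; simp only [map_smul]
    _ = ∑ p ∈ s, ∑ q ∈ s, W.counit (W.mul g q.2) • (p.1 ⊗ₜ[k] W.mul p.2 q.1) := h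
    _ = ∑ p ∈ s, p.1 ⊗ₜ[k] (W.mul p.2 (W.εsMap g)) := by
        refine Finset.sum_congr rfl fun p _ => ?_
        rw [εs_eq W hs g, map_sum, TensorProduct.tmul_sum]
        refine Finset.sum_congr rfl fun q _ => ?_
        rw [map_smul, TensorProduct.tmul_smul]

lemma DS2 (hs : W.comul W.one = ∑ p ∈ s, p.1 ⊗ₜ[k] p.2) (g : H) :
    W.comul (W.εsMap g) = ∑ p ∈ s, p.1 ⊗ₜ[k] (W.mul (W.εsMap g) p.2) := by
  have h := congrArg (⇑((TensorProduct.rid k (H ⊗[k] H)).toLinearMap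
      ∘ₗ LinearMap.lTensor (H ⊗[k] H) (W.counit ∘ₗ W.mul g))) (comul_one_op_sum W hW hs)
  simp only [map_sum, LinearMap.coe_comp, LinearEquiv.coe_coe, Function.comp_apply,
    LinearMap.lTensor_tmul, TensorProduct.rid_tmul] at h
  calc W.comul (W.εsMap g)
      = ∑ p ∈ s, W.counit (W.mul g p.2) • W.comul p.1 := by
        rw [εs_eq W hs g, map_sum]; simp only [map_smul]
    _ = ∑ p ∈ s, ∑ q ∈ s, W.counit (W.mul g q.2) • (p.1 ⊗ₜ[k] W.mul q.1 p.2) := h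
    _ = ∑ p ∈ s, p.1 ⊗ₜ[k] (W.mul (W.εsMap g) p.2) := by
        refine Finset.sum_congr rfl fun p _ => ?_
        rw [εs_eq W hs g]
        rw [show (W.mul (∑ q ∈ s, W.counit (W.mul g q.2) • q.1)) p.2
            = ∑ q ∈ s, W.counit (W.mul g q.2) • W.mul q.1 p.2 by
          simp [map_sum, LinearMap.sum_apply, LinearMap.smul_apply]]
        rw [TensorProduct.tmul_sum]
        refine Finset.sum_congr rfl fun q _ => ?_
        rw [TensorProduct.tmul_smul]

lemma commDt (hs : W.comul W.one = ∑ p ∈ s, p.1 ⊗ₜ[k] p.2) (g h : H) :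
    W.mul (W.εsMap g) (W.εtMap h) = W.mul (W.εtMap h) (W.εsMap g) := by
  have hds : (∑ p ∈ s, p.1 ⊗ₜ[k] (W.mul p.2 (W.εsMap g)))
      = ∑ p ∈ s, p.1 ⊗ₜ[k] (W.mul (W.εsMap g) p.2) :=
    (DS1 W hW hs g).symm.trans (DS2 W hW hs g)
  have h2 := congrArg (⇑((TensorProduct.lid k H).toLinearMap
      ∘ₗ LinearMap.rTensor H (W.counit ∘ₗ W.mul.flip h))) hds
  simp only [map_sum, LinearMap.coe_comp, LinearEquiv.coe_coe, Function.comp_apply,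
    LinearMap.rTensor_tmul, TensorProduct.lid_tmul, LinearMap.flip_apply] at h2
  calc W.mul (W.εsMap g) (W.εtMap h)
      = ∑ p ∈ s, W.counit (W.mul p.1 h) • W.mul (W.εsMap g) p.2 := by
        rw [εt_eq W hs h, map_sum]; simp only [map_smul]
    _ = ∑ p ∈ s, W.counit (W.mul p.1 h) • W.mul p.2 (W.εsMap g) := h2.symm
    _ = W.mul (W.εtMap h) (W.εsMap g) := by
        rw [εt_eq W hs h]
        simp [map_sum, LinearMap.sum_apply, LinearMap.smul_apply]

lemma commW (hs : W.comul W.one = ∑ p ∈ s, p.1 ⊗ₜ[k] p.2) (v : H) :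
    ∑ p ∈ s, (W.mul p.1 (W.εtMap v)) ⊗ₜ[k] p.2
      = ∑ p ∈ s, (W.mul (W.εtMap v) p.1) ⊗ₜ[k] p.2 := by
  have h1 := congrArg (⇑(LinearMap.rTensor H (W.mul.flip (W.εtMap v)))) (R1 W hW hs)
  have h2 := congrArg (⇑(LinearMap.rTensor H (W.mul (W.εtMap v)))) (R1 W hW hs)
  simp only [map_sum, LinearMap.rTensor_tmul, LinearMap.flip_apply] at h1 h2
  calc ∑ p ∈ s, (W.mul p.1 (W.εtMap v)) ⊗ₜ[k] p.2
      = ∑ p ∈ s, (W.mul (W.εsMap p.1) (W.εtMap v)) ⊗ₜ[k] p.2 := h1.symm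
    _ = ∑ p ∈ s, (W.mul (W.εtMap v) (W.εsMap p.1)) ⊗ₜ[k] p.2 := by
        refine Finset.sum_congr rfl fun p _ => ?_
        rw [commDt W hW hs p.1 v]
    _ = ∑ p ∈ s, (W.mul (W.εtMap v) p.1) ⊗ₜ[k] p.2 := h2

lemma Dt (hs : W.comul W.one = ∑ p ∈ s, p.1 ⊗ₜ[k] p.2) (h : H) :
    W.comul (W.εtMap h) = ∑ p ∈ s, (W.mul (W.εtMap h) p.1) ⊗ₜ[k] p.2 := by
  have hc := congrArg (⇑((TensorProduct.lid k (H ⊗[k] H)).toLinearMap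
      ∘ₗ LinearMap.rTensor (H ⊗[k] H) (W.counit ∘ₗ W.mul.flip h))) (coassoc_one_sum W hW hs)
  simp only [map_sum, LinearMap.coe_comp, LinearEquiv.coe_coe, Function.comp_apply,
    LinearMap.rTensor_tmul, TensorProduct.lid_tmul, LinearMap.flip_apply] at hc
  calc W.comul (W.εtMap h)
      = ∑ p ∈ s, W.counit (W.mul p.1 h) • W.comul p.2 := by
        rw [εt_eq W hs h, map_sum]; simp only [map_smul]
    _ = ∑ p ∈ s, ∑ q ∈ s, W.counit (W.mul p.1 h) • ((W.mul p.2 q.1) ⊗ₜ[k] q.2) := hc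
    _ = ∑ q ∈ s, ∑ p ∈ s, W.counit (W.mul p.1 h) • ((W.mul p.2 q.1) ⊗ₜ[k] q.2) :=
        Finset.sum_comm
    _ = ∑ q ∈ s, (W.mul (W.εtMap h) q.1) ⊗ₜ[k] q.2 := by
        refine Finset.sum_congr rfl fun q _ => ?_
        rw [εt_eq W hs h]
        rw [show (W.mul (∑ p ∈ s, W.counit (W.mul p.1 h) • p.2)) q.1
            = ∑ p ∈ s, W.counit (W.mul p.1 h) • W.mul p.2 q.1 by
          simp [map_sum, LinearMap.sum_apply, LinearMap.smul_apply]]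
        rw [TensorProduct.sum_tmul]
        exact Finset.sum_congr rfl fun p _ => by rw [TensorProduct.smul_tmul']

lemma tt_sum (hs : W.comul W.one = ∑ p ∈ s, p.1 ⊗ₜ[k] p.2) :
    ∑ p ∈ s, ∑ q ∈ s, (W.mul p.1 q.1) ⊗ₜ[k] (W.mul p.2 q.2)
      = ∑ p ∈ s, p.1 ⊗ₜ[k] p.2 := by
  have h := hW.comul_mul W.one W.one
  rw [hW.one_mul W.one, hs] at h
  have hexp : W.mul₂ (∑ p ∈ s, p.1 ⊗ₜ[k] p.2) (∑ q ∈ s, q.1 ⊗ₜ[k] q.2)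
      = ∑ p ∈ s, ∑ q ∈ s, (W.mul p.1 q.1) ⊗ₜ[k] (W.mul p.2 q.2) := by
    simp [WBData.mul₂, TensorProduct.sum_tmul, TensorProduct.tmul_sum, map_sum,
      tensorTensorTensorComm_tmul, mulT_tmul]
    exact Finset.sum_comm
  rw [hexp] at h
  exact h.symm

lemma comul_zw (hs : W.comul W.one = ∑ p ∈ s, p.1 ⊗ₜ[k] p.2) (u v : H) :
    W.comul (W.mul (W.εtMap u) (W.εtMap v))
      = ∑ p ∈ s, (W.mul (W.mul (W.εtMap u) (W.εtMap v)) p.1) ⊗ₜ[k] p.2 := by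
  have h1 := hW.comul_mul (W.εtMap u) (W.εtMap v)
  rw [Dt W hW hs u, Dt W hW hs v] at h1
  have hexp : W.mul₂ (∑ p ∈ s, (W.mul (W.εtMap u) p.1) ⊗ₜ[k] p.2)
        (∑ q ∈ s, (W.mul (W.εtMap v) q.1) ⊗ₜ[k] q.2)
      = ∑ p ∈ s, ∑ q ∈ s,
          (W.mul (W.mul (W.εtMap u) p.1) (W.mul (W.εtMap v) q.1)) ⊗ₜ[k] (W.mul p.2 q.2) := by
    simp [WBData.mul₂, TensorProduct.sum_tmul, TensorProduct.tmul_sum, map_sum,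
      tensorTensorTensorComm_tmul, mulT_tmul]
    exact Finset.sum_comm
  rw [hexp] at h1
  have key : ∀ q : H × H,
      ∑ p ∈ s, (W.mul (W.mul (W.εtMap u) p.1) (W.mul (W.εtMap v) q.1)) ⊗ₜ[k] (W.mul p.2 q.2)
        = ∑ p ∈ s,
          (W.mul (W.mul (W.εtMap u) (W.εtMap v)) (W.mul p.1 q.1)) ⊗ₜ[k] (W.mul p.2 q.2) := by
    intro q
    have hF := congrArg (⇑(TensorProduct.map (W.mul (W.εtMap u) ∘ₗ W.mul.flip q.1)
        (W.mul.flip q.2))) (commW W hW hs v)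
    simp only [map_sum, TensorProduct.map_tmul, LinearMap.coe_comp, Function.comp_apply,
      LinearMap.flip_apply] at hF
    calc ∑ p ∈ s, (W.mul (W.mul (W.εtMap u) p.1) (W.mul (W.εtMap v) q.1)) ⊗ₜ[k]
            (W.mul p.2 q.2)
        = ∑ p ∈ s, (W.mul (W.εtMap u) (W.mul (W.mul p.1 (W.εtMap v)) q.1)) ⊗ₜ[k]
            (W.mul p.2 q.2) := by
          refine Finset.sum_congr rfl fun p _ => ?_
          rw [hW.mul_assoc p.1 (W.εtMap v) q.1, ← hW.mul_assoc (W.εtMap u) p.1]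
      _ = ∑ p ∈ s, (W.mul (W.εtMap u) (W.mul (W.mul (W.εtMap v) p.1) q.1)) ⊗ₜ[k]
            (W.mul p.2 q.2) := hF
      _ = ∑ p ∈ s, (W.mul (W.mul (W.εtMap u) (W.εtMap v)) (W.mul p.1 q.1)) ⊗ₜ[k]
            (W.mul p.2 q.2) := by
          refine Finset.sum_congr rfl fun p _ => ?_
          rw [hW.mul_assoc (W.εtMap v) p.1 q.1, ← hW.mul_assoc (W.εtMap u) (W.εtMap v)]
  rw [Finset.sum_comm] at h1
  rw [Finset.sum_congr rfl fun q _ => key q] at h1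
  have h2 := congrArg (⇑(LinearMap.rTensor H (W.mul (W.mul (W.εtMap u) (W.εtMap v)))))
    (tt_sum W hW hs)
  simp only [map_sum, LinearMap.rTensor_tmul] at h2
  rw [h1, Finset.sum_comm, h2]

lemma εt_mul_closed (hs : W.comul W.one = ∑ p ∈ s, p.1 ⊗ₜ[k] p.2) (u v : H) :
    W.εtMap (W.mul (W.εtMap u) (W.εtMap v)) = W.mul (W.εtMap u) (W.εtMap v) := by
  have hcl := hW.counit_left (W.mul (W.εtMap u) (W.εtMap v))
  rw [comul_zw W hW hs u v] at hcl
  simp only [map_sum, LinearMap.rTensor_tmul, TensorProduct.lid_tmul] at hcl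
  have hb := congrArg (⇑((TensorProduct.lid k H).toLinearMap ∘ₗ LinearMap.rTensor H
      (W.counit ∘ₗ W.mul (W.mul (W.εtMap u) (W.εtMap v))))) (R2 W hW hs)
  simp only [map_sum, LinearMap.coe_comp, LinearEquiv.coe_coe, Function.comp_apply,
    LinearMap.rTensor_tmul, TensorProduct.lid_tmul] at hb
  calc W.εtMap (W.mul (W.εtMap u) (W.εtMap v))
      = W.εtMap (∑ p ∈ s, W.counit (W.mul (W.mul (W.εtMap u) (W.εtMap v)) p.1) • p.2) := by
        rw [hcl]
    _ = ∑ p ∈ s, W.counit (W.mul (W.mul (W.εtMap u) (W.εtMap v)) p.1) • W.εtMap p.2 := by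
        rw [map_sum]; simp only [map_smul]
    _ = ∑ p ∈ s, W.counit (W.mul (W.mul (W.εtMap u) (W.εtMap v)) p.1) • p.2 := hb
    _ = W.mul (W.εtMap u) (W.εtMap v) := hcl

lemma eval_εt (hs : W.comul W.one = ∑ p ∈ s, p.1 ⊗ₜ[k] p.2) (w u : H) :
    W.counit (W.mul w (W.εtMap u)) = W.counit (W.mul w u) := by
  rw [εt_eq W hs u]
  rw [show (W.mul w) (∑ p ∈ s, W.counit (W.mul p.1 u) • p.2)
      = ∑ p ∈ s, W.counit (W.mul p.1 u) • W.mul w p.2 by simp [map_sum, map_smul]]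
  rw [map_sum]
  rw [star' W hW hs w u]
  refine Finset.sum_congr rfl fun p _ => ?_
  rw [map_smul, smul_eq_mul, mul_comm]

omit hW in
lemma sep_Ht (hs : W.comul W.one = ∑ p ∈ s, p.1 ⊗ₜ[k] p.2) {a b : H}
    (ha : W.εtMap a = a) (hb : W.εtMap b = b)
    (hw : ∀ w : H, W.counit (W.mul w a) = W.counit (W.mul w b)) : a = b := by
  rw [← ha, ← hb, εt_eq W hs a, εt_eq W hs b]
  exact Finset.sum_congr rfl fun p _ => by rw [hw p.1]

lemma εt_one (hs : W.comul W.one = ∑ p ∈ s, p.1 ⊗ₜ[k] p.2) :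
    W.εtMap W.one = W.one := by
  have hcl := hW.counit_left W.one
  rw [hs] at hcl
  simp only [map_sum, LinearMap.rTensor_tmul, TensorProduct.lid_tmul] at hcl
  rw [εt_eq W hs W.one]
  calc ∑ p ∈ s, W.counit (W.mul p.1 W.one) • p.2
      = ∑ p ∈ s, W.counit p.1 • p.2 := by
        refine Finset.sum_congr rfl fun p _ => ?_
        rw [hW.mul_one p.1]
    _ = W.one := hcl

end Aux

/-- In every weak bialgebra `H`, the restriction of `ε_t` to `H_s` is an algebra
anti-isomorphism `H_s → H_t`, with inverse the restriction to `H_t` of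
`\bar ε_s(x) = 1' ε(1'' x)`. -/
theorem εt_anti_isomorphism {k : Type} [Field k] {H : Type} [AddCommGroup H] [Module k H]
    (W : WBData k H) (hW : W.IsWeakBialgebra) :
    (∀ x ∈ W.Hs, W.εtMap x ∈ W.Ht) ∧
    (∀ x ∈ W.Hs, ∀ y ∈ W.Hs, W.εtMap (W.mul x y) = W.mul (W.εtMap y) (W.εtMap x)) ∧
    (W.εtMap W.one = W.one) ∧
    (∀ x ∈ W.Hs, W.barεsMap (W.εtMap x) = x) ∧
    (∀ z ∈ W.Ht, W.barεsMap z ∈ W.Hs ∧ W.εtMap (W.barεsMap z) = z) := by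
  obtain ⟨s, hs⟩ := TensorProduct.exists_finset (W.comul W.one)
  refine ⟨fun x _ => ⟨x, rfl⟩, ?_, εt_one W hW hs, ?_, ?_⟩
  · intro x hx y hy
    obtain ⟨g, rfl⟩ := hx
    obtain ⟨g', rfl⟩ := hy
    refine sep_Ht W hs (εt_εt W hW hs _) (εt_mul_closed W hW hs (W.εsMap g') (W.εsMap g)) ?_
    intro w
    rw [eval_εt W hW hs w (W.mul (W.εsMap g) (W.εsMap g'))]
    symm
    rw [← hW.mul_assoc w (W.εtMap (W.εsMap g')) (W.εtMap (W.εsMap g))]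
    rw [eval_εt W hW hs (W.mul w (W.εtMap (W.εsMap g'))) (W.εsMap g)]
    rw [hW.mul_assoc w (W.εtMap (W.εsMap g')) (W.εsMap g)]
    rw [← commDt W hW hs g (W.εsMap g')]
    rw [← hW.mul_assoc w (W.εsMap g) (W.εtMap (W.εsMap g'))]
    rw [eval_εt W hW hs (W.mul w (W.εsMap g)) (W.εsMap g')]
    rw [hW.mul_assoc w (W.εsMap g) (W.εsMap g')]
  · intro x hx
    obtain ⟨g, rfl⟩ := hx
    rw [K1 W hW hs (W.εsMap g), bεs_εs W hW hs g]
  · intro z hz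
    obtain ⟨h, rfl⟩ := hz
    constructor
    · rw [K1 W hW hs h]
      exact ⟨W.barεsMap h, εs_bεs W hW hs h⟩
    · rw [K1 W hW hs h, K2 W hW hs h]
end

section
/- Let f: H → H' be a homomorphism of weak bialgebras. Then the restriction f|_{H_s}: H_s → H'_s is an isomorphism of algebras, with inverse given by y ↦ 1' ε(f(1'') y) for y ∈ H'_s; similarly f|_{H_t}: H_t → H'_t is an algebra isomorphism with inverse z ↦ ε(z f(1')) 1''. -/
open TensorProduct

set_option maxRecDepth 100000
noncomputable section Aux
namespace WBData
variable {k : Type} [CommRing k] {H : Type} [AddCommGroup H] [Module k H] (W : WBData k H)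
variable {ι : Type} (s : Finset ι) (a b : ι → H)

lemma εs_apply (rep : W.comul W.one = ∑ i ∈ s, a i ⊗ₜ[k] b i) (x : H) :
    W.εsMap x = ∑ i ∈ s, W.counit (W.mul x (b i)) • a i := by
  simp [εsMap, rep, mulT, map_sum, TensorProduct.tmul_sum]

lemma εt_apply (rep : W.comul W.one = ∑ i ∈ s, a i ⊗ₜ[k] b i) (x : H) :
    W.εtMap x = ∑ i ∈ s, W.counit (W.mul (a i) x) • b i := by
  simp [εtMap, rep, mulT, map_sum, TensorProduct.sum_tmul]

lemma key1 (hW : W.IsWeakBialgebra) (rep : W.comul W.one = ∑ i ∈ s, a i ⊗ₜ[k] b i) :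
    ∑ i ∈ s, ∑ j ∈ s, W.counit (W.mul (b i) (a j)) • (a i ⊗ₜ[k] b j)
      = ∑ i ∈ s, a i ⊗ₜ[k] b i := by
  have h := congrArg (TensorProduct.map
      ((TensorProduct.rid k H).toLinearMap ∘ₗ LinearMap.lTensor H W.counit)
      (LinearMap.id (R := k) (M := H))) hW.comul_one
  rw [rep] at h
  simp only [map_sum, LinearMap.rTensor_tmul, TensorProduct.map_tmul, LinearMap.coe_comp,
    Function.comp_apply, LinearMap.id_coe, id_eq, LinearEquiv.coe_coe] at h
  simp only [hW.counit_right] at h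
  rw [h]
  simp only [TensorProduct.comm_tmul, TensorProduct.sum_tmul, TensorProduct.tmul_sum,
    map_sum, LinearEquiv.coe_coe, TensorProduct.tensorTensorTensorComm_tmul,
    TensorProduct.map_tmul, TensorProduct.assoc_symm_tmul, LinearMap.rTensor_tmul,
    LinearMap.id_coe, id_eq, mulT, TensorProduct.lift.tmul, LinearMap.coe_comp,
    Function.comp_apply, LinearMap.lTensor_tmul, TensorProduct.rid_tmul,
    TensorProduct.smul_tmul', TensorProduct.smul_tmul]
  exact Finset.sum_comm ..

lemma key2 (hW : W.IsWeakBialgebra) (rep : W.comul W.one = ∑ i ∈ s, a i ⊗ₜ[k] b i) :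
    ∑ i ∈ s, ∑ j ∈ s, W.counit (W.mul (a j) (b i)) • (a i ⊗ₜ[k] b j)
      = ∑ i ∈ s, a i ⊗ₜ[k] b i := by
  have h := congrArg (TensorProduct.map
      ((TensorProduct.rid k H).toLinearMap ∘ₗ LinearMap.lTensor H W.counit)
      (LinearMap.id (R := k) (M := H))) hW.comul_one_op
  rw [rep] at h
  simp only [map_sum, LinearMap.rTensor_tmul, TensorProduct.map_tmul, LinearMap.coe_comp,
    Function.comp_apply, LinearMap.id_coe, id_eq, LinearEquiv.coe_coe] at h
  simp only [hW.counit_right] at h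
  rw [h]
  simp only [TensorProduct.comm_tmul, TensorProduct.sum_tmul, TensorProduct.tmul_sum,
    map_sum, LinearEquiv.coe_coe, TensorProduct.tensorTensorTensorComm_tmul,
    TensorProduct.map_tmul, TensorProduct.assoc_symm_tmul, LinearMap.rTensor_tmul,
    LinearMap.id_coe, id_eq, mulT, TensorProduct.lift.tmul, LinearMap.coe_comp,
    Function.comp_apply, LinearMap.lTensor_tmul, TensorProduct.rid_tmul,
    TensorProduct.smul_tmul', TensorProduct.smul_tmul]
  exact Finset.sum_comm ..

lemma contractR (c : ι → ι → k)
    (hK : ∑ i ∈ s, ∑ j ∈ s, c i j • (a i ⊗ₜ[k] b j) = ∑ i ∈ s, a i ⊗ₜ[k] b i)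
    (g : H →ₗ[k] k) :
    ∑ i ∈ s, ∑ j ∈ s, c i j • g (b j) • a i = ∑ i ∈ s, g (b i) • a i := by
  have h := congrArg ((TensorProduct.rid k H).toLinearMap ∘ₗ LinearMap.lTensor H g) hK
  simp only [map_sum, map_smul, LinearMap.coe_comp, Function.comp_apply,
    LinearEquiv.coe_coe, LinearMap.lTensor_tmul, TensorProduct.rid_tmul] at h
  simpa [smul_smul, mul_comm] using h

lemma contractL (c : ι → ι → k)
    (hK : ∑ i ∈ s, ∑ j ∈ s, c i j • (a i ⊗ₜ[k] b j) = ∑ i ∈ s, a i ⊗ₜ[k] b i)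
    (g : H →ₗ[k] k) :
    ∑ i ∈ s, ∑ j ∈ s, c i j • g (a i) • b j = ∑ i ∈ s, g (a i) • b i := by
  have h := congrArg ((TensorProduct.lid k H).toLinearMap ∘ₗ LinearMap.rTensor H g) hK
  simp only [map_sum, map_smul, LinearMap.coe_comp, Function.comp_apply,
    LinearEquiv.coe_coe, LinearMap.rTensor_tmul, TensorProduct.lid_tmul] at h
  simpa [smul_smul, mul_comm] using h

end WBData
end Aux
/-- For a homomorphism `f : H → H'` of weak bialgebras, the restriction
`f|_{H_s} : H_s → H'_s` is an algebra isomorphism with inverse `y ↦ 1' ε(f(1'') y)`, and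
`f|_{H_t} : H_t → H'_t` is an algebra isomorphism with inverse `z ↦ ε(z f(1')) 1''`. -/
theorem hom_restricts_to_base_iso {k : Type} [Field k] {H H' : Type}
    [AddCommGroup H] [Module k H] [AddCommGroup H'] [Module k H']
    (W : WBData k H) (W' : WBData k H') (hW : W.IsWeakBialgebra) (hW' : W'.IsWeakBialgebra)
    (f : H →ₗ[k] H') (hf : IsWBHom W W' f) :
    -- the inverse maps
    let invs : H' → H := fun y => (TensorProduct.rid k H)
      (LinearMap.lTensor H (W'.counit ∘ₗ W'.mul.flip y ∘ₗ f) (W.comul W.one))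
    let invt : H' → H := fun z => (TensorProduct.lid k H)
      (LinearMap.rTensor H (W'.counit ∘ₗ W'.mul z ∘ₗ f) (W.comul W.one))
    -- f|_{H_s} is multiplicative and unital on H_s automatically (f is an algebra map);
    -- it maps H_s bijectively onto H'_s with the stated inverse:
    (∀ x ∈ W.Hs, f x ∈ W'.Hs ∧ invs (f x) = x) ∧
    (∀ y ∈ W'.Hs, invs y ∈ W.Hs ∧ f (invs y) = y) ∧
    (∀ x ∈ W.Ht, f x ∈ W'.Ht ∧ invt (f x) = x) ∧
    (∀ z ∈ W'.Ht, invt z ∈ W.Ht ∧ f (invt z) = z) := by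
  intro invs invt
  obtain ⟨hmul, hone, hcomul, hcounit⟩ := hf
  obtain ⟨S, rep⟩ := TensorProduct.exists_finset (W.comul W.one)
  have rep' : W'.comul W'.one = ∑ i ∈ S, f i.1 ⊗ₜ[k] f i.2 := by
    rw [← hone, hcomul, rep, map_sum]; simp
  have K1 := W.key1 S _ _ hW rep
  have K2 := W.key2 S _ _ hW rep
  have K1' := W'.key1 S (fun i => f i.1) (fun i => f i.2) hW' rep'
  have hεs := W.εs_apply S _ _ rep
  have hεt := W.εt_apply S _ _ rep
  have hεs' := W'.εs_apply S (fun i => f i.1) (fun i => f i.2) rep'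
  have hεt' := W'.εt_apply S (fun i => f i.1) (fun i => f i.2) rep'
  have hinvs : ∀ y, invs y = ∑ i ∈ S, W'.counit (W'.mul (f i.2) y) • i.1 := by
    intro y
    simp only [invs]
    rw [rep]
    simp [map_sum]
  have hinvt : ∀ z, invt z = ∑ i ∈ S, W'.counit (W'.mul z (f i.1)) • i.2 := by
    intro z
    simp only [invt]
    rw [rep]
    simp [map_sum]
  refine ⟨?_, ?_, ?_, ?_⟩
  · rintro x hx
    obtain ⟨h, rfl⟩ := hx
    constructor
    · refine ⟨f h, ?_⟩
      rw [hεs' (f h), hεs h, map_sum]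
      refine Finset.sum_congr rfl fun i _ => ?_
      rw [← hmul, hcounit, map_smul]
    · have e1 : invs (f (W.εsMap h)) =
          ∑ i ∈ S, W.counit (W.mul i.2 (W.εsMap h)) • i.1 := by
        rw [hinvs]
        exact Finset.sum_congr rfl fun i _ => by rw [← hmul, hcounit]
      have C := WBData.contractR S _ _ _ K1 (W.counit ∘ₗ W.mul h)
      simp only [LinearMap.coe_comp, Function.comp_apply, LinearMap.flip_apply] at C
      rw [e1]
      calc ∑ i ∈ S, W.counit (W.mul i.2 (W.εsMap h)) • i.1
          = ∑ i ∈ S, ∑ j ∈ S,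
              W.counit (W.mul i.2 j.1) • W.counit (W.mul h j.2) • i.1 := by
            refine Finset.sum_congr rfl fun i _ => ?_
            rw [hεs h]
            simp [map_sum, map_smul, Finset.sum_smul, smul_smul, mul_comm]
        _ = ∑ i ∈ S, W.counit (W.mul h i.2) • i.1 := C
        _ = W.εsMap h := (hεs h).symm
  · rintro y hy
    constructor
    · refine ⟨invs y, ?_⟩
      have C := WBData.contractR S _ _ _ K2 (W'.counit ∘ₗ W'.mul.flip y ∘ₗ f)
      simp only [LinearMap.coe_comp, Function.comp_apply, LinearMap.flip_apply] at C
      rw [hinvs y, map_sum]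
      calc ∑ j ∈ S, W.εsMap (W'.counit (W'.mul (f j.2) y) • j.1)
          = ∑ i ∈ S, ∑ j ∈ S,
              W.counit (W.mul j.1 i.2) • W'.counit (W'.mul (f j.2) y) • i.1 := by
            rw [Finset.sum_comm]
            refine Finset.sum_congr rfl fun j _ => ?_
            rw [map_smul, hεs j.1]
            simp [Finset.smul_sum, smul_smul, mul_comm]
        _ = ∑ i ∈ S, W'.counit (W'.mul (f i.2) y) • i.1 := C
    · obtain ⟨h', rfl⟩ := hy
      have e2 : f (invs (W'.εsMap h')) =
          ∑ i ∈ S, W'.counit (W'.mul (f i.2) (W'.εsMap h')) • f i.1 := by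
        rw [hinvs, map_sum]
        exact Finset.sum_congr rfl fun i _ => by rw [map_smul]
      have C := WBData.contractR S (fun i => f i.1) (fun i => f i.2) _ K1'
        (W'.counit ∘ₗ W'.mul h')
      simp only [LinearMap.coe_comp, Function.comp_apply, LinearMap.flip_apply] at C
      rw [e2]
      calc ∑ i ∈ S, W'.counit (W'.mul (f i.2) (W'.εsMap h')) • f i.1
          = ∑ i ∈ S, ∑ j ∈ S,
              W'.counit (W'.mul (f i.2) (f j.1)) • W'.counit (W'.mul h' (f j.2)) • f i.1 := by
            refine Finset.sum_congr rfl fun i _ => ?_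
            rw [hεs' h']
            simp [map_sum, map_smul, Finset.sum_smul, smul_smul, mul_comm]
        _ = ∑ i ∈ S, W'.counit (W'.mul h' (f i.2)) • f i.1 := C
        _ = W'.εsMap h' := (hεs' h').symm
  · rintro x hx
    obtain ⟨h, rfl⟩ := hx
    constructor
    · refine ⟨f h, ?_⟩
      rw [hεt' (f h), hεt h, map_sum]
      refine Finset.sum_congr rfl fun i _ => ?_
      rw [← hmul, hcounit, map_smul]
    · have e1 : invt (f (W.εtMap h)) =
          ∑ i ∈ S, W.counit (W.mul (W.εtMap h) i.1) • i.2 := by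
        rw [hinvt]
        exact Finset.sum_congr rfl fun i _ => by rw [← hmul, hcounit]
      have C := WBData.contractL S _ _ _ K1 (W.counit ∘ₗ W.mul.flip h)
      simp only [LinearMap.coe_comp, Function.comp_apply, LinearMap.flip_apply] at C
      rw [e1]
      calc ∑ i ∈ S, W.counit (W.mul (W.εtMap h) i.1) • i.2
          = ∑ j ∈ S, ∑ i ∈ S,
              W.counit (W.mul i.2 j.1) • W.counit (W.mul i.1 h) • j.2 := by
            refine Finset.sum_congr rfl fun j _ => ?_
            rw [hεt h]
            simp [map_sum, map_smul, Finset.sum_smul, smul_smul, mul_comm]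
        _ = ∑ i ∈ S, W.counit (W.mul i.1 h) • i.2 := by rw [Finset.sum_comm]; exact C
        _ = W.εtMap h := (hεt h).symm
  · rintro z hz
    constructor
    · refine ⟨invt z, ?_⟩
      have C := WBData.contractL S _ _ _ K2 (W'.counit ∘ₗ W'.mul z ∘ₗ f)
      simp only [LinearMap.coe_comp, Function.comp_apply, LinearMap.flip_apply] at C
      rw [hinvt z, map_sum]
      calc ∑ j ∈ S, W.εtMap (W'.counit (W'.mul z (f j.1)) • j.2)
          = ∑ j ∈ S, ∑ i ∈ S,
              W.counit (W.mul i.1 j.2) • W'.counit (W'.mul z (f j.1)) • i.2 := by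
            refine Finset.sum_congr rfl fun j _ => ?_
            rw [map_smul, hεt j.2]
            simp [Finset.smul_sum, smul_smul, mul_comm]
        _ = ∑ i ∈ S, W'.counit (W'.mul z (f i.1)) • i.2 := C
    · obtain ⟨h', rfl⟩ := hz
      have e2 : f (invt (W'.εtMap h')) =
          ∑ i ∈ S, W'.counit (W'.mul (W'.εtMap h') (f i.1)) • f i.2 := by
        rw [hinvt, map_sum]
        exact Finset.sum_congr rfl fun i _ => by rw [map_smul]
      have C := WBData.contractL S (fun i => f i.1) (fun i => f i.2) _ K1'
        (W'.counit ∘ₗ W'.mul.flip h')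
      simp only [LinearMap.coe_comp, Function.comp_apply, LinearMap.flip_apply] at C
      rw [e2]
      calc ∑ j ∈ S, W'.counit (W'.mul (W'.εtMap h') (f j.1)) • f j.2
          = ∑ j ∈ S, ∑ i ∈ S,
              W'.counit (W'.mul (f i.2) (f j.1)) • W'.counit (W'.mul (f i.1) h') • f j.2 := by
            refine Finset.sum_congr rfl fun j _ => ?_
            rw [hεt' h']
            simp [map_sum, map_smul, Finset.sum_smul, smul_smul, mul_comm]
        _ = ∑ i ∈ S, W'.counit (W'.mul (f i.1) h') • f i.2 := by rw [Finset.sum_comm]; exact C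
        _ = W'.εtMap h' := (hεt' h').symm
end
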